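/- Let E be a finite source-free directed graph. Then the following are equivalent: (i) for all positive integers m and n and every element [x] ∈ M_E, if m·[Σ_{v∈E⁰} v] + [x] = n·[Σ_{v∈E⁰} v] in M_E then m ≤ n; (ii) E contains a source cycle. -/

import Mathlib

variable {V E : Type}

/-- A cycle in the directed graph with edge set `E`, vertex set `V`, and source/range
maps `s r : E → V`: a nonempty list of edges `e₁ ⋯ eₙ` with `r eᵢ = s eᵢ₊₁`
(indices cyclically, so in particular `r eₙ = s e₁`) whose source vertices are pairwise
distinct. -/
def IsCycle (s r : E → V) (c : List E) : Prop :=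
  ∃ h : 0 < c.length,
    (∀ (i : ℕ) (hi : i < c.length),
        r (c.get ⟨i, hi⟩) = s (c.get ⟨(i + 1) % c.length, Nat.mod_lt _ h⟩)) ∧
    (c.map s).Nodup

/-- The defining relations of the graph monoid `M_E` on the free abelian monoid
`V → ℕ` on the vertices: `v = Σ_{e ∈ s⁻¹(v)} r e` for each regular vertex `v`. -/
def graphRel [Fintype E] [DecidableEq V] (s r : E → V) (x y : V → ℕ) : Prop :=
  ∃ v : V, (∃ e : E, s e = v) ∧ x = Pi.single v 1 ∧
    y = ∑ e : E, if s e = v then Pi.single (r e) 1 else 0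

/-- The graph monoid `M_E`: the quotient of the free abelian monoid on the vertices by
the monoid congruence generated by the relations `v = Σ_{e ∈ s⁻¹(v)} r e`. -/
def graphMonoidMk [Fintype E] [DecidableEq V] (s r : E → V) :
    (V → ℕ) →+ (addConGen (graphRel s r)).Quotient :=
  (addConGen (graphRel s r)).mk'

/-!
If `c` is a source cycle with vertex set `C`, then every edge ending in `C` lies on `c`, so the
number of `C`-vertices of an element of `ℕ^V` is invariant under the defining relations. This
gives an additive map `M_E → ℕ` sending `[Σ v]` to `|C| > 0`, which forces `m ≤ n`.

Conversely, choose for every vertex `v` an edge `pe v` ending in `v`, and repeatedly replace every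
regular vertex by its successors, starting from `Σ v`. This does not change the class in `M_E`. A
vertex with at least two incoming edges gets coefficient `≥ 2` after one step, and the coefficient
of any vertex `v` is at least the previous coefficient of `s (pe v)`. If there is no source cycle,
walking backwards along `pe` from any vertex reaches a vertex whose in-degree is not `1`. So after
finitely many steps every coefficient is `≥ 2`, and `[Σ v] = 2 • [Σ v] + [y]` for some `y`.
-/

open Finset Function

theorem IsCycle.nodup {s r : E → V} {c : List E} (hc : IsCycle s r c) : c.Nodup :=
  hc.2.2.of_map s

theorem IsCycle.range_mem {s r : E → V} {c : List E} (hc : IsCycle s r c) {e : E} (he : e ∈ c) :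
    r e ∈ c.map s := by
  obtain ⟨i, rfl⟩ := List.mem_iff_get.1 he
  rw [hc.2.1 i i.2]
  exact List.mem_map_of_mem (List.get_mem _ _)

theorem Function.exists_iterate_mem_periodicPts {α : Type*} [Finite α] (f : α → α) (x : α) :
    ∃ a, f^[a] x ∈ periodicPts f := by
  obtain ⟨a, b, hne, heq⟩ := Finite.exists_ne_map_eq_of_infinite fun n => f^[n] x
  wlog hab : a < b generalizing a b
  · exact this b a hne.symm heq.symm (by omega)
  refine ⟨a, b - a, by omega, ?_⟩
  rw [IsPeriodicPt, IsFixedPt, ← iterate_add_apply, Nat.sub_add_cancel hab.le, heq]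

theorem isCycle_ofFn_iterate {s r : E → V} {pe : V → E} (hpe : ∀ v, r (pe v) = v) {w : V}
    (hw : w ∈ periodicPts (s ∘ pe)) :
    IsCycle s r (List.ofFn fun t : Fin (minimalPeriod (s ∘ pe) w) =>
      pe ((s ∘ pe)^[minimalPeriod (s ∘ pe) w - 1 - t] w)) := by
  set n := minimalPeriod (s ∘ pe) w
  have hn : 0 < n := minimalPeriod_pos_of_mem_periodicPts hw
  refine ⟨by simpa using hn, fun i hi => ?_, ?_⟩
  · have hi' : i < n := by simpa using hi
    simp only [List.get_ofFn, List.length_ofFn, Fin.val_cast, hpe]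
    rw [← comp_apply (f := s) (g := pe), ← iterate_succ_apply' (s ∘ pe)]
    rcases Nat.lt_or_ge (i + 1) n with h | h
    · rw [Nat.mod_eq_of_lt h]
      congr 1
      omega
    · rw [show i + 1 = n by omega, Nat.mod_self, Nat.sub_zero, Nat.succ_eq_add_one,
        Nat.sub_add_cancel hn, iterate_minimalPeriod, show n - 1 - i = 0 by omega,
        iterate_zero_apply]
  · simp only [List.map_ofFn, List.nodup_ofFn]
    intro t₁ t₂ h
    have hshift : ∀ m, s (pe ((s ∘ pe)^[m] w)) = (s ∘ pe)^[m] ((s ∘ pe) w) := fun m =>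
      (iterate_succ_apply' (s ∘ pe) m w).symm.trans (iterate_succ_apply (s ∘ pe) m w)
    simp only [comp_apply] at h
    rw [hshift, hshift] at h
    have hn' : minimalPeriod (s ∘ pe) ((s ∘ pe) w) = n := minimalPeriod_apply hw
    have := iterate_injOn_Iio_minimalPeriod (f := s ∘ pe) (x := (s ∘ pe) w)
      (by rw [Set.mem_Iio, hn']; omega) (by rw [Set.mem_Iio, hn']; omega) h
    omega

def IsSourceCycle [Fintype E] [DecidableEq V] (s r : E → V) (c : List E) : Prop :=
  IsCycle s r c ∧ ∀ v ∈ c.map s, #{e | r e = v} = 1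

theorem exists_isSourceCycle_of_forall_iterate [Fintype V] [Fintype E] [DecidableEq V]
    {s r : E → V} {pe : V → E} (hpe : ∀ v, r (pe v) = v) {u : V}
    (hu : ∀ i, #{e | r e = (s ∘ pe)^[i] u} = 1) : ∃ c, IsSourceCycle s r c := by
  obtain ⟨a, ha⟩ := exists_iterate_mem_periodicPts (s ∘ pe) u
  refine ⟨_, isCycle_ofFn_iterate hpe ha, fun v hv => ?_⟩
  rw [List.map_ofFn, List.mem_ofFn] at hv
  obtain ⟨t, rfl⟩ := hv
  rw [comp_apply, ← comp_apply (f := s), ← iterate_succ_apply' (s ∘ pe),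
    ← iterate_add_apply]
  exact hu _

namespace IsSourceCycle

variable [Fintype E] [DecidableEq V] {s r : E → V} {c : List E}

theorem range_mem_iff (hc : IsSourceCycle s r c) {e : E} : r e ∈ c.map s ↔ e ∈ c := by
  classical
  refine ⟨fun he => ?_, hc.1.range_mem⟩
  set T : Finset E := {e | r e ∈ c.map s}
  have hinj : Set.InjOn r T := fun e₁ he₁ e₂ _ h => by
    have he₁ := (mem_filter.1 (mem_coe.1 he₁)).2
    exact card_le_one.1 (hc.2 _ he₁).le e₁ (by simp) e₂ (by simp [← h])
  have hcard : #T ≤ #c.toFinset :=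
    calc #T ≤ #(c.map s).toFinset :=
          card_le_card_of_injOn r (fun e he => List.mem_toFinset.2 (mem_filter.1 he).2) hinj
      _ = #c.toFinset := by
          rw [List.toFinset_card_of_nodup hc.1.2.2, List.length_map,
            List.toFinset_card_of_nodup hc.1.nodup]
  have hsub : c.toFinset ⊆ T := fun e he =>
    mem_filter.2 ⟨mem_univ e, hc.1.range_mem (List.mem_toFinset.1 he)⟩
  have heT : e ∈ T := mem_filter.2 ⟨mem_univ e, he⟩
  rw [← eq_of_subset_of_card_le hsub hcard] at heT
  exact List.mem_toFinset.1 heT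

theorem card_filter_source_eq_range_mem (hc : IsSourceCycle s r c) (v : V) :
    #{e | s e = v ∧ r e ∈ c.map s} = if v ∈ c.map s then 1 else 0 := by
  split_ifs with hv
  · obtain ⟨e, he, rfl⟩ := List.mem_map.1 hv
    refine card_eq_one.2 ⟨e, eq_singleton_iff_unique_mem.2 ⟨?_, fun e' he' => ?_⟩⟩
    · simpa using hc.1.range_mem he
    · obtain ⟨hse', hre'⟩ := (mem_filter.1 he').2
      exact List.inj_on_of_nodup_map hc.1.2.2 (hc.range_mem_iff.1 hre') he hse'
  · refine card_eq_zero.2 (filter_eq_empty_iff.2 fun e _ he => hv ?_)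
    exact he.1 ▸ List.mem_map_of_mem (hc.range_mem_iff.1 he.2)

end IsSourceCycle

theorem AddMonoidHom.le_of_nsmul_add_eq_nsmul {M : Type*} [AddCommMonoid M] (φ : M →+ ℕ)
    {a b : M} (ha : 0 < φ a) {m n : ℕ} (h : m • a + b = n • a) : m ≤ n := by
  have hφ := congrArg φ h
  rw [map_add, map_nsmul, map_nsmul, smul_eq_mul, smul_eq_mul] at hφ
  exact Nat.le_of_mul_le_mul_right (hφ ▸ Nat.le_add_right _ _) ha

namespace GraphMonoid

variable [Fintype E] [DecidableEq V] (s r : E → V)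

def successorSum (v : V) : V → ℕ := ∑ e, if s e = v then Pi.single (r e) 1 else 0

theorem graphMonoidMk_successorSum {v : V} (hv : ∃ e, s e = v) :
    graphMonoidMk s r (successorSum s r v) = graphMonoidMk s r (Pi.single v 1) :=
  ((AddCon.eq _).2 (AddConGen.Rel.of _ _ ⟨v, hv, rfl, rfl⟩)).symm

variable [Fintype V]

theorem sum_nsmul_successorSum (x : V → ℕ) :
    ∑ v, x v • successorSum s r v = ∑ e, x (s e) • Pi.single (r e) 1 := by
  simp only [successorSum, smul_sum, smul_ite, smul_zero]
  rw [sum_comm]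
  exact sum_congr rfl fun e _ => by simp

def expand (x : V → ℕ) : V → ℕ :=
  ∑ v, x v • if ∃ e, s e = v then successorSum s r v else Pi.single v 1

theorem graphMonoidMk_expand (x : V → ℕ) :
    graphMonoidMk s r (expand s r x) = graphMonoidMk s r x := by
  conv_rhs => rw [← univ_sum_single x]
  simp only [expand, map_sum, map_nsmul]
  refine sum_congr rfl fun v _ => ?_
  rw [apply_ite (graphMonoidMk s r), ite_eq_right_iff.2 (graphMonoidMk_successorSum s r),
    ← map_nsmul, ← Pi.single_smul, smul_eq_mul, mul_one]

theorem sum_filter_range_eq_le_expand (x : V → ℕ) (u : V) :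
    ∑ e with r e = u, x (s e) ≤ expand s r x u := by
  have hle : ∑ v, x v • successorSum s r v ≤ expand s r x := by
    refine sum_le_sum fun v _ => nsmul_le_nsmul_right ?_ _
    split_ifs with hv
    · exact le_rfl
    · rw [successorSum, sum_eq_zero fun e _ => if_neg fun he => hv ⟨e, he⟩]
      exact zero_le
  calc ∑ e with r e = u, x (s e) = (∑ v, x v • successorSum s r v) u := by
        rw [sum_nsmul_successorSum, Finset.sum_apply]
        simp [Pi.single_apply, sum_filter, eq_comm (a := u)]
    _ ≤ expand s r x u := hle u

theorem le_expand_of_range_eq {x : V → ℕ} {e : E} {u : V} (he : r e = u) :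
    x (s e) ≤ expand s r x u :=
  (single_le_sum (f := fun e => x (s e)) (fun _ _ => Nat.zero_le _)
    (mem_filter.2 ⟨mem_univ e, he⟩)).trans (sum_filter_range_eq_le_expand s r x u)

theorem two_le_expand {x : V → ℕ} (hx : ∀ v, 1 ≤ x v) {u : V} (hu : 1 < #{e | r e = u}) :
    2 ≤ expand s r x u :=
  calc 2 ≤ #{e | r e = u} • 1 := by rw [smul_eq_mul, mul_one]; exact hu
    _ ≤ ∑ e with r e = u, x (s e) := card_nsmul_le_sum _ _ _ fun e _ => hx (s e)
    _ ≤ expand s r x u := sum_filter_range_eq_le_expand s r x u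

variable {s r}

theorem one_le_iterate_expand (hsf : ∀ v, ∃ e, r e = v) (k : ℕ) (v : V) :
    1 ≤ (expand s r)^[k] 1 v := by
  induction k generalizing v with
  | zero => exact le_rfl
  | succ k ih =>
    obtain ⟨e, rfl⟩ := hsf v
    rw [iterate_succ_apply']
    exact (ih (s e)).trans (le_expand_of_range_eq s r rfl)

theorem iterate_expand_apply_iterate_le {pe : V → E} (hpe : ∀ v, r (pe v) = v) (x : V → ℕ)
    (k i : ℕ) (u : V) : (expand s r)^[k] x ((s ∘ pe)^[i] u) ≤ (expand s r)^[k + i] x u := by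
  induction i generalizing u with
  | zero => exact le_rfl
  | succ i ih =>
    rw [iterate_succ_apply, ← add_assoc, iterate_succ_apply']
    exact (ih _).trans (le_expand_of_range_eq s r (hpe u))

theorem two_le_iterate_expand {pe : V → E} (hpe : ∀ v, r (pe v) = v) {i : ℕ} {u : V}
    (hi : #{e | r e = (s ∘ pe)^[i] u} ≠ 1) {k : ℕ} (hk : i < k) :
    2 ≤ (expand s r)^[k] 1 u := by
  obtain ⟨k, rfl⟩ := Nat.exists_eq_add_of_lt hk
  have hpos : 0 < #{e | r e = (s ∘ pe)^[i] u} :=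
    card_pos.2 ⟨pe ((s ∘ pe)^[i] u), by simp [hpe]⟩
  calc 2 ≤ (expand s r)^[k + 1] 1 ((s ∘ pe)^[i] u) := by
        rw [iterate_succ_apply']
        exact two_le_expand s r (one_le_iterate_expand (fun v => ⟨pe v, hpe v⟩) k) (by omega)
    _ ≤ (expand s r)^[i + k + 1] 1 u := by
        rw [add_assoc, add_comm i]
        exact iterate_expand_apply_iterate_le hpe 1 (k + 1) i u

theorem exists_two_le_iterate_expand {pe : V → E} (hpe : ∀ v, r (pe v) = v)
    (h : ∀ u, ∃ i, #{e | r e = (s ∘ pe)^[i] u} ≠ 1) :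
    ∃ k, ∀ u, 2 ≤ (expand s r)^[k] 1 u := by
  choose i hi using h
  exact ⟨univ.sup i + 1, fun u =>
    two_le_iterate_expand hpe (hi u) (Nat.lt_succ_of_le (le_sup (mem_univ u)))⟩

def weight (w : V → ℕ) : (V → ℕ) →+ ℕ where
  toFun x := ∑ v, x v * w v
  map_zero' := by simp
  map_add' x y := by simp [add_mul, sum_add_distrib]

theorem weight_single (w : V → ℕ) (v : V) : weight w (Pi.single v 1) = w v := by
  simp [weight, Pi.single_apply]

def lift (w : V → ℕ) (hw : ∀ v, (∃ e, s e = v) → w v = ∑ e with s e = v, w (r e)) :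
    (addConGen (graphRel s r)).Quotient →+ ℕ :=
  AddCon.lift _ (weight w) <| AddCon.addConGen_le.2 <| by
    rintro _ _ ⟨v, hv, rfl, rfl⟩
    change weight w _ = weight w _
    simp only [map_sum, weight_single, ← sum_filter]
    exact hw v hv

theorem lift_graphMonoidMk (w : V → ℕ)
    (hw : ∀ v, (∃ e, s e = v) → w v = ∑ e with s e = v, w (r e)) (x : V → ℕ) :
    lift w hw (graphMonoidMk s r x) = ∑ v, x v * w v :=
  AddCon.lift_mk' _ x

theorem graphMonoidMk_iterate_expand (k : ℕ) (x : V → ℕ) :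
    graphMonoidMk s r ((expand s r)^[k] x) = graphMonoidMk s r x := by
  induction k generalizing x with
  | zero => rfl
  | succ k ih => rw [iterate_succ_apply, ih, graphMonoidMk_expand]

theorem exists_two_nsmul_add_eq (hsf : ∀ v, ∃ e, r e = v) (hno : ¬∃ c, IsSourceCycle s r c) :
    ∃ y, 2 • graphMonoidMk s r 1 + graphMonoidMk s r y = 1 • graphMonoidMk s r 1 := by
  choose pe hpe using hsf
  obtain ⟨k, hk⟩ := exists_two_le_iterate_expand hpe fun u =>
    not_forall.1 fun h => hno (exists_isSourceCycle_of_forall_iterate hpe h)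
  refine ⟨(expand s r)^[k] 1 - 2 • 1, ?_⟩
  rw [← map_nsmul, ← map_add, one_nsmul, ← graphMonoidMk_iterate_expand k 1]
  congr 1
  funext u
  simp only [Pi.add_apply, Pi.sub_apply, Pi.smul_apply, Pi.one_apply, smul_eq_mul]
  have := hk u
  omega

end GraphMonoid

theorem IsSourceCycle.le_of_nsmul_add_eq_nsmul [Fintype V] [Fintype E] [DecidableEq V]
    {s r : E → V} {c : List E} (hc : IsSourceCycle s r c) {m n : ℕ} {x : V → ℕ}
    (h : m • graphMonoidMk s r 1 + graphMonoidMk s r x = n • graphMonoidMk s r 1) :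
    m ≤ n := by
  let w : V → ℕ := fun v => if v ∈ c.map s then 1 else 0
  have hw : ∀ v, (∃ e, s e = v) → w v = ∑ e with s e = v, w (r e) := fun v _ => by
    rw [sum_boole, filter_filter, hc.card_filter_source_eq_range_mem, Nat.cast_id]
  refine (GraphMonoid.lift w hw).le_of_nsmul_add_eq_nsmul ?_ h
  rw [GraphMonoid.lift_graphMonoidMk]
  obtain ⟨e, he⟩ := List.exists_mem_of_length_pos hc.1.1
  refine sum_pos' (fun _ _ => Nat.zero_le _) ⟨s e, mem_univ _, ?_⟩
  simp only [w, Pi.one_apply, one_mul, if_pos (List.mem_map_of_mem he), Nat.one_pos]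

/-- Let `E` be a finite source-free directed graph.  The following are
equivalent:
(i) for all positive integers `m`, `n` and every `[x] ∈ M_E`, if
    `m • [Σ_{v ∈ E⁰} v] + [x] = n • [Σ_{v ∈ E⁰} v]` in `M_E` then `m ≤ n`;
(ii) `E` contains a source cycle (a cycle `c` with `|r⁻¹(v)| = 1` for all vertices `v`
     of `c`). -/
theorem stmt_9 [Fintype V] [Fintype E] [DecidableEq V]
    (s r : E → V)
    (hsourcefree : ∀ v : V, ∃ e : E, r e = v) :
    ((∀ m n : ℕ, 0 < m → 0 < n → ∀ x : V → ℕ,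
        m • graphMonoidMk s r (∑ v : V, Pi.single v 1) + graphMonoidMk s r x =
            n • graphMonoidMk s r (∑ v : V, Pi.single v 1) →
          m ≤ n) ↔
      ∃ c : List E, IsCycle s r c ∧
        ∀ v ∈ c.map s, (Finset.univ.filter fun e => r e = v).card = 1) := by
  have hone : ∑ v : V, Pi.single v (1 : ℕ) = 1 := univ_sum_single 1
  simp only [hone]
  refine ⟨fun hugn => ?_, fun ⟨c, hc⟩ _ _ _ _ _ h => ?_⟩
  · by_contra hno
    obtain ⟨y, hy⟩ := GraphMonoid.exists_two_nsmul_add_eq hsourcefree hno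
    have := hugn 2 1 two_pos one_pos y hy
    omega
  · exact IsSourceCycle.le_of_nsmul_add_eq_nsmul hc h
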